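/- arXiv:1409.7902 — 2 statements merged into one kernel-verified Lean document; each statement's English description precedes it below -/
import Mathlib

section
/- With the hypotheses and definition of A_K as in the regularization of a strictly dominating family, the assignment K ↦ A_K is upper semicontinuous from K(M) (with the Hausdorff metric topology) to K(X): for any compact K ⊆ M and open V ⊆ X with A_K ⊆ V, there is δ > 0 such that A_L ⊆ V whenever the Hausdorff distance between K and L is less than δ. -/
open scoped ENNReal

/-!
If `L_k → K` in the Hausdorff metric and `x_k ∈ A_{L_k}`, then `x_k ∈ F_{C_k}` for compact sets
`C_k` that eventually lie in every neighbourhood of `K`. The union of `K` with such a sequence of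
compact sets is compact, so the `x_k` lie in one compact `F_T` and have a cluster point `z`. The
tails `T_m = K ∪ ⋃_{k ≥ m} C_k` are compact and shrink to `K`, and the closed sets `F_{T_m}`
contain `x_k` for `k ≥ m`; hence `z ∈ F_{T_m}` for all `m`, i.e. `z ∈ A_K`. So if all `x_k`
avoid an open `V ⊇ A_K`, so does `z`, a contradiction.
-/

open Filter Metric Set Topology

section

variable {M X ι : Type*}

theorem IsCompact.union_iUnion_of_tendsto_smallSets [TopologicalSpace X] {K : Set X}
    (hK : IsCompact K) {C : ι → Set X} (hC : ∀ i, IsCompact (C i))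
    (hlim : Tendsto C cofinite (𝓝ˢ K).smallSets) : IsCompact (K ∪ ⋃ i, C i) := by
  intro l hl hle
  by_cases hKl : ∃ x ∈ K, ClusterPt x l
  · obtain ⟨x, hx, hxl⟩ := hKl
    exact ⟨x, Or.inl hx, hxl⟩
  obtain ⟨U, hU, t, ht, hUt⟩ : ∃ U ∈ 𝓝ˢ K, ∃ t ∈ l, Disjoint U t :=
    Filter.disjoint_iff.1 <| hK.disjoint_nhdsSet_left.2 fun x hx =>
      clusterPt_iff_not_disjoint.not_left.1 fun hxl => hKl ⟨x, hx, hxl⟩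
  have hfin : {i | ¬C i ⊆ U}.Finite := eventually_cofinite.1 (tendsto_smallSets_iff.1 hlim U hU)
  have hmem : (⋃ i ∈ {i | ¬C i ⊆ U}, C i) ∈ l := by
    refine mem_of_superset (inter_mem (le_principal_iff.1 hle) ht) ?_
    rintro y ⟨hyK | hyC, hyt⟩
    · exact absurd hyt (hUt.notMem_of_mem_left (subset_of_mem_nhdsSet hU hyK))
    · obtain ⟨i, hi⟩ := mem_iUnion.1 hyC
      exact mem_biUnion (fun hCU => hUt.notMem_of_mem_left (hCU hi) hyt) hi
  obtain ⟨x, hx, hxl⟩ := (hfin.isCompact_biUnion fun i _ => hC i) (le_principal_iff.2 hmem)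
  exact ⟨x, Or.inr (iUnion₂_subset (fun i _ => subset_iUnion C i) hx), hxl⟩

section Thickening

variable [PseudoMetricSpace M] {K : Set M} {l : Filter ι} {L : ι → Set M}

theorem tendsto_smallSets_nhdsSet_iff_thickening (hK : IsCompact K) :
    Tendsto L l (𝓝ˢ K).smallSets ↔ ∀ ε > 0, ∀ᶠ i in l, L i ⊆ thickening ε K :=
  (hasBasis_nhdsSet_thickening hK).smallSets.tendsto_right_iff

theorem tendsto_smallSets_nhdsSet_of_hausdorffEDist (hK : IsCompact K)
    (hL : Tendsto (fun i => hausdorffEDist K (L i)) l (𝓝 0)) :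
    Tendsto L l (𝓝ˢ K).smallSets := by
  refine (tendsto_smallSets_nhdsSet_iff_thickening hK).2 fun ε hε => ?_
  filter_upwards [hL (Iio_mem_nhds (ENNReal.ofReal_pos.2 hε))] with i hi y hy
  rw [mem_thickening_iff_infEDist_lt]
  calc infEDist y K ≤ hausdorffEDist (L i) K := infEDist_le_hausdorffEDist_of_mem hy
    _ = hausdorffEDist K (L i) := hausdorffEDist_comm
    _ < ENNReal.ofReal ε := hi

theorem Filter.Tendsto.thickening_smallSets_nhdsSet (hK : IsCompact K)
    (hL : Tendsto L l (𝓝ˢ K).smallSets) {r : ι → ℝ} (hr : Tendsto r l (𝓝 0)) :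
    Tendsto (fun i => thickening (r i) (L i)) l (𝓝ˢ K).smallSets := by
  refine (tendsto_smallSets_nhdsSet_iff_thickening hK).2 fun ε hε => ?_
  filter_upwards [(tendsto_smallSets_nhdsSet_iff_thickening hK).1 hL (ε / 2) (half_pos hε),
    hr (Iio_mem_nhds (half_pos hε))] with i hLi hri
  calc thickening (r i) (L i) ⊆ thickening (r i) (thickening (ε / 2) K) :=
        thickening_subset_of_subset _ hLi
    _ ⊆ thickening (r i + ε / 2) K := thickening_thickening_subset _ _ _
    _ ⊆ thickening ε K := thickening_mono (by linarith [show r i < ε / 2 from hri]) K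

end Thickening

section Regularization

variable [PseudoMetricSpace M]

/-- The set `A_K` of the paper; `∀ t ∈ L, infDist t K < 1 / n` says `L ⊆ U_n(K)`. -/
noncomputable def regularization (F : Set M → Set X) (K : Set M) : Set X :=
  ⋂ n ∈ {n : ℕ | 1 ≤ n}, ⋃ L ∈ {L : Set M | IsCompact L ∧ K ⊆ L ∧
    ∀ t ∈ L, infDist t K < 1 / (n : ℝ)}, F L

theorem mem_regularization_iff {F : Set M → Set X} {K : Set M} (hK : K.Nonempty) {x : X} :
    x ∈ regularization F K ↔
      ∀ ε > 0, ∃ L, IsCompact L ∧ K ⊆ L ∧ L ⊆ thickening ε K ∧ x ∈ F L := by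
  simp only [regularization, mem_iInter₂, mem_iUnion₂, mem_ofPred_eq, exists_prop]
  constructor
  · intro h ε hε
    obtain ⟨n, hn⟩ := exists_nat_one_div_lt hε
    obtain ⟨L, ⟨hL, hKL, hLK⟩, hx⟩ := h (n + 1) (by omega)
    refine ⟨L, hL, hKL, fun t ht => (mem_thickening_iff_infDist_lt hK).2 ?_, hx⟩
    exact (hLK t ht).trans (by exact_mod_cast hn)
  · intro h n hn
    obtain ⟨L, hL, hKL, hLK, hx⟩ := h (1 / n) (by positivity)
    exact ⟨L, ⟨hL, hKL, fun t ht => (mem_thickening_iff_infDist_lt hK).1 (hLK ht)⟩, hx⟩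

variable [TopologicalSpace X] {F : Set M → Set X}

theorem mem_regularization_of_mapClusterPt
    (hFclosed : ∀ K, IsCompact K → IsClosed (F K))
    (hFmono : ∀ K L, IsCompact K → IsCompact L → K ⊆ L → F K ⊆ F L)
    {K : Set M} (hK : IsCompact K) (hKne : K.Nonempty) {C : ℕ → Set M}
    (hC : ∀ k, IsCompact (C k)) (hlim : Tendsto C atTop (𝓝ˢ K).smallSets)
    {x : ℕ → X} (hx : ∀ k, x k ∈ F (C k)) {z : X} (hz : MapClusterPt z atTop x) :
    z ∈ regularization F K := by
  refine (mem_regularization_iff hKne).2 fun ε hε => ?_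
  obtain ⟨m, hm⟩ :=
    eventually_atTop.1 ((tendsto_smallSets_nhdsSet_iff_thickening hK).1 hlim ε hε)
  have hT : IsCompact (K ∪ ⋃ k, C (k + m)) :=
    hK.union_iUnion_of_tendsto_smallSets (fun k => hC _)
      (Nat.cofinite_eq_atTop ▸ hlim.comp (tendsto_add_atTop_nat m))
  refine ⟨_, hT, subset_union_left,
    union_subset (self_subset_thickening hε K) (iUnion_subset fun k => hm _ (by omega)), ?_⟩
  refine (hFclosed _ hT).mem_of_mapClusterPt hz ?_
  filter_upwards [eventually_ge_atTop m] with k hk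
  have hCk : C k ⊆ ⋃ j, C (j + m) := by
    simpa [Nat.sub_add_cancel hk] using subset_iUnion (fun j => C (j + m)) (k - m)
  exact hFmono _ _ (hC k) hT (subset_union_of_subset_right hCk K) (hx k)

theorem exists_mapClusterPt_mem_regularization [T2Space X]
    (hFcomp : ∀ K, IsCompact K → IsCompact (F K))
    (hFmono : ∀ K L, IsCompact K → IsCompact L → K ⊆ L → F K ⊆ F L)
    {K : Set M} (hK : IsCompact K) (hKne : K.Nonempty) {L : ℕ → Set M}
    (hLne : ∀ k, (L k).Nonempty) (hlim : Tendsto L atTop (𝓝ˢ K).smallSets)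
    {x : ℕ → X} (hx : ∀ k, x k ∈ regularization F (L k)) :
    ∃ z ∈ regularization F K, MapClusterPt z atTop x := by
  choose C hC _ hCL hxC using fun k =>
    (mem_regularization_iff (hLne k)).1 (hx k) (1 / ((k : ℝ) + 1)) Nat.one_div_pos_of_nat
  have hClim : Tendsto C atTop (𝓝ˢ K).smallSets :=
    (hlim.thickening_smallSets_nhdsSet hK tendsto_one_div_add_atTop_nhds_zero_nat).smallSets_mono
      (Eventually.of_forall hCL)
  have hT := hK.union_iUnion_of_tendsto_smallSets hC (Nat.cofinite_eq_atTop ▸ hClim)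
  obtain ⟨z, -, hz⟩ := (hFcomp _ hT).exists_mapClusterPt_of_frequently (l := atTop) <|
    Frequently.of_forall fun k =>
      hFmono _ _ (hC k) hT (subset_union_of_subset_right (subset_iUnion C k) K) (hxC k)
  exact ⟨z, mem_regularization_of_mapClusterPt (fun _ h => (hFcomp _ h).isClosed) hFmono hK hKne
    hC hClim hxC hz, hz⟩

end Regularization

end

theorem regularization_usc_general (M X : Type*) [MetricSpace M] [MetricSpace X]
    (F : Set M → Set X)
    (hFcomp : ∀ K : Set M, IsCompact K → IsCompact (F K))
    (hFmono : ∀ K L : Set M, IsCompact K → IsCompact L → K ⊆ L → F K ⊆ F L)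
    (A : Set M → Set X)
    (hA : ∀ K : Set M, K.Nonempty → A K =
      ⋂ n ∈ {n : ℕ | 1 ≤ n}, ⋃ L ∈ {L : Set M | IsCompact L ∧ K ⊆ L ∧
        ∀ t ∈ L, Metric.infDist t K < 1 / (n : ℝ)}, F L) :
    ∀ K : Set M, IsCompact K → ∀ V : Set X, IsOpen V → A K ⊆ V →
      ∃ δ : ℝ≥0∞, 0 < δ ∧ ∀ L : Set M, IsCompact L →
        EMetric.hausdorffEdist K L < δ → A L ⊆ V := by
  have hA' : ∀ K : Set M, K.Nonempty → A K = regularization F K := hA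
  intro K hK V hV hAV
  rcases K.eq_empty_or_nonempty with rfl | hKne
  · refine ⟨1, one_pos, fun L _ hL => ?_⟩
    obtain rfl : L = ∅ := L.eq_empty_or_nonempty.resolve_right fun hLne =>
      (hL.trans ENNReal.one_lt_top).ne (hausdorffEDist_comm.trans (hausdorffEDist_empty hLne))
    exact hAV
  by_contra! hcon
  choose L _ hKL hLV using fun k : ℕ =>
    hcon (k : ℝ≥0∞)⁻¹ (ENNReal.inv_pos.2 (ENNReal.natCast_ne_top k))
  choose x hxA hxV using fun k => not_subset.1 (hLV k)
  have hLne : ∀ k, (L k).Nonempty := fun k =>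
    nonempty_of_hausdorffEDist_ne_top hKne (hKL k).ne_top
  have hlim : Tendsto L atTop (𝓝ˢ K).smallSets :=
    tendsto_smallSets_nhdsSet_of_hausdorffEDist hK <|
      tendsto_of_tendsto_of_tendsto_of_le_of_le tendsto_const_nhds
        ENNReal.tendsto_inv_nat_nhds_zero (fun _ => zero_le) fun k => (hKL k).le
  obtain ⟨z, hzA, hz⟩ := exists_mapClusterPt_mem_regularization hFcomp hFmono hK hKne hLne hlim
    fun k => hA' _ (hLne k) ▸ hxA k
  exact hV.isClosed_compl.mem_of_mapClusterPt hz (Eventually.of_forall hxV)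
    (hAV (hA' K hKne ▸ hzA))

/-- The regularized assignment `K ↦ A_K` is upper semicontinuous with respect to the
Hausdorff distance on compact subsets of `M`. -/
theorem regularization_usc (M X : Type*) [MetricSpace M] [MetricSpace X]
    (F : Set M → Set X)
    (hFcomp : ∀ K : Set M, IsCompact K → IsCompact (F K))
    (hFmono : ∀ K L : Set M, IsCompact K → IsCompact L → K ⊆ L → F K ⊆ F L)
    (hFcover : (⋃ K ∈ {K : Set M | IsCompact K}, F K) = Set.univ)
    (A : Set M → Set X)
    (hA0 : A ∅ = F ∅)
    (hA : ∀ K : Set M, K.Nonempty → A K =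
      ⋂ n ∈ {n : ℕ | 1 ≤ n}, ⋃ L ∈ {L : Set M | IsCompact L ∧ K ⊆ L ∧
        ∀ t ∈ L, Metric.infDist t K < 1 / (n : ℝ)}, F L) :
    ∀ K : Set M, IsCompact K → ∀ V : Set X, IsOpen V → A K ⊆ V →
      ∃ δ : ℝ≥0∞, 0 < δ ∧ ∀ L : Set M, IsCompact L →
        EMetric.hausdorffEdist K L < δ → A L ⊆ V :=
  regularization_usc_general M X F hFcomp hFmono A hA
end

section
/- Let M, X be metric spaces and {F_K : K ∈ K(M)} a monotone family of compact subsets of X. Then for any compact K ⊆ M and any open V ⊆ X with ⋂_{n≥1} ⋃{F_L : K ⊆ L ⊆ U_n(K)} ⊆ V, there exists an open set U ⊇ K in M such that F_L ⊆ V for every compact L ⊆ U. -/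
/-!
Suppose no `n` works, i.e. for every `n` some compact `L_n ⊇ K` within `1/(n+1)` of `K` has a
point `x_n ∈ F_{L_n} \ V`. The tails `S_n = K ∪ ⋃_{m ≥ n} L_m` are compact because the `L_m`
shrink into every neighbourhood of `K`, and they still lie within `1/(n+1)` of `K`. By Cantor's
intersection theorem the decreasing nonempty compacts `F_{S_n} \ V` have a common point, which
lies in `⋂_n ⋃ {F_L : K ⊆ L ⊆ U_n(K)} ⊆ V`: a contradiction. So some `U_n(K)` works, since for
compact `L ⊆ U_n(K)` we have `F_L ⊆ F_{K ∪ L}`.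
-/

open Metric Filter Set Topology

theorem IsCompact.union_iUnion_of_tendsto_smallSets_s9 {X : Type*} [TopologicalSpace X]
    {K : Set X} (hK : IsCompact K) {L : ℕ → Set X} (hL : ∀ m, IsCompact (L m))
    (hLK : Tendsto L atTop (𝓝ˢ K).smallSets) : IsCompact (K ∪ ⋃ m, L m) := by
  classical
  refine isCompact_of_finite_subcover fun U hUo hcover => ?_
  obtain ⟨t₀, ht₀⟩ := hK.elim_finite_subcover U hUo (subset_union_left.trans hcover)
  have hW : ⋃ i ∈ t₀, U i ∈ 𝓝ˢ K := (isOpen_biUnion fun i _ => hUo i).mem_nhdsSet.2 ht₀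
  obtain ⟨N, hN⟩ := eventually_atTop.1 (hLK.eventually (eventually_smallSets_subset.2 hW))
  have hLcover : ∀ m, ∃ t : Finset _, L m ⊆ ⋃ i ∈ t, U i := fun m =>
    (hL m).elim_finite_subcover U hUo
      ((subset_iUnion L m).trans (subset_union_right.trans hcover))
  choose t ht using hLcover
  refine ⟨t₀ ∪ (Finset.range N).biUnion t, union_subset ?_ (iUnion_subset fun m => ?_)⟩
  · exact ht₀.trans (biUnion_subset_biUnion_left fun i hi => Finset.mem_union_left _ hi)
  by_cases hm : N ≤ m
  · exact (hN m hm).trans (biUnion_subset_biUnion_left fun i hi => Finset.mem_union_left _ hi)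
  · refine (ht m).trans (biUnion_subset_biUnion_left fun i hi => Finset.mem_union_right _ ?_)
    exact Finset.mem_biUnion.2 ⟨m, Finset.mem_range.2 (not_le.1 hm), hi⟩

section Metric

variable {M : Type*} [MetricSpace M]

theorem tendsto_smallSets_nhdsSet_of_infDist_lt {ι : Type*} {l : Filter ι} {K : Set M}
    (hK : IsCompact K) (hKne : K.Nonempty) {L : ι → Set M} {ε : ι → ℝ}
    (hε : Tendsto ε l (𝓝 0)) (hL : ∀ i, ∀ t ∈ L i, infDist t K < ε i) :
    Tendsto L l (𝓝ˢ K).smallSets := by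
  refine (hasBasis_nhdsSet_thickening hK).smallSets.tendsto_right_iff.2 fun δ hδ => ?_
  filter_upwards [hε.eventually_lt_const hδ] with i hi t ht
  exact (mem_thickening_iff_infDist_lt hKne).2 ((hL i t ht).trans hi)

/-- As `infDist t ∅ = 0`, the distance condition is vacuous for `K = ∅` (given `ε > 0`). -/
def compactsNear (K : Set M) (ε : ℝ) : Set (Set M) :=
  {L | IsCompact L ∧ K ⊆ L ∧ ∀ t ∈ L, infDist t K < ε}

theorem compactsNear_mono {K : Set M} {ε δ : ℝ} (h : ε ≤ δ) :
    compactsNear K ε ⊆ compactsNear K δ :=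
  fun _ ⟨hL, hKL, hLε⟩ => ⟨hL, hKL, fun t ht => (hLε t ht).trans_le h⟩

theorem union_mem_compactsNear {K L : Set M} {ε : ℝ} (hKL : IsCompact (K ∪ L))
    (hε : 0 < ε) (hLε : ∀ t ∈ L, infDist t K < ε) : K ∪ L ∈ compactsNear K ε := by
  refine ⟨hKL, subset_union_left, fun t ht => ?_⟩
  rcases ht with ht | ht
  · rwa [infDist_zero_of_mem ht]
  · exact hLε t ht

theorem mem_compactsNear_empty {L : Set M} {ε : ℝ} (hL : IsCompact L) (hε : 0 < ε) :
    L ∈ compactsNear ∅ ε :=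
  ⟨hL, empty_subset L, fun t _ => by rwa [infDist_empty]⟩

theorem union_iUnion_add_mem_compactsNear {K : Set M} (hK : IsCompact K) (hKne : K.Nonempty)
    {L : ℕ → Set M} (hL : ∀ m : ℕ, L m ∈ compactsNear K (1 / (m + 1 : ℝ))) (n : ℕ) :
    K ∪ ⋃ m, L (m + n) ∈ compactsNear K (1 / (n + 1 : ℝ)) := by
  have hLK : Tendsto L atTop (𝓝ˢ K).smallSets :=
    tendsto_smallSets_nhdsSet_of_infDist_lt hK hKne tendsto_one_div_add_atTop_nhds_zero_nat
      fun m => (hL m).2.2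
  refine union_mem_compactsNear
    (hK.union_iUnion_of_tendsto_smallSets_s9 (fun m => (hL _).1)
      (hLK.comp (tendsto_add_atTop_nat n))) (by positivity) fun t ht => ?_
  obtain ⟨m, htm⟩ := mem_iUnion.1 ht
  calc infDist t K < 1 / ((m + n : ℕ) + 1 : ℝ) := (hL (m + n)).2.2 t htm
    _ ≤ 1 / (n + 1 : ℝ) := by gcongr; exact_mod_cast n.le_add_left m

variable {X : Type*} [MetricSpace X] {F : Set M → Set X}

theorem exists_forall_compactsNear_subset
    (hFcomp : ∀ K : Set M, IsCompact K → IsCompact (F K))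
    (hFmono : ∀ K L : Set M, IsCompact K → IsCompact L → K ⊆ L → F K ⊆ F L)
    {K : Set M} (hK : IsCompact K) {V : Set X} (hV : IsOpen V)
    (hsub : ⋂ n ∈ {n : ℕ | 1 ≤ n}, ⋃ L ∈ compactsNear K (1 / (n : ℝ)), F L ⊆ V) :
    ∃ n : ℕ, 1 ≤ n ∧ ∀ L ∈ compactsNear K (1 / (n : ℝ)), F L ⊆ V := by
  rcases K.eq_empty_or_nonempty with rfl | hKne
  · refine ⟨1, le_rfl, fun L hL => fun z hz => hsub (mem_iInter₂.2 fun n hn => ?_)⟩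
    exact mem_biUnion (mem_compactsNear_empty hL.1 (one_div_pos.2 (Nat.cast_pos.2 hn))) hz
  by_contra! hbad
  have hLx : ∀ m : ℕ, ∃ L ∈ compactsNear K (1 / (m + 1 : ℝ)), ∃ x ∈ F L, x ∉ V := fun m => by
    obtain ⟨L, hL, hLV⟩ := hbad (m + 1) m.succ_pos
    exact ⟨L, by exact_mod_cast hL, not_subset.1 hLV⟩
  choose L hL x hxL hxV using hLx
  set S : ℕ → Set M := fun n => K ∪ ⋃ m, L (m + n)
  have hS : ∀ n : ℕ, S n ∈ compactsNear K (1 / (n + 1 : ℝ)) :=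
    union_iUnion_add_mem_compactsNear hK hKne hL
  have hLS : ∀ m n, n ≤ m → L m ⊆ S n := fun m n hnm => by
    obtain ⟨k, rfl⟩ := Nat.exists_eq_add_of_le' hnm
    exact (subset_iUnion (fun k => L (k + n)) k).trans subset_union_right
  have hSanti : ∀ n, S (n + 1) ⊆ S n :=
    fun n => union_subset subset_union_left (iUnion_subset fun m => hLS _ n (by omega))
  obtain ⟨z, hz⟩ := IsCompact.nonempty_iInter_of_sequence_nonempty_isCompact_isClosed
    (fun n => F (S n) \ V)
    (fun n => sdiff_subset_sdiff_left (hFmono _ _ (hS _).1 (hS n).1 (hSanti n)))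
    (fun n => ⟨x n, hFmono _ _ (hL n).1 (hS n).1 (hLS n n le_rfl) (hxL n), hxV n⟩)
    ((hFcomp _ (hS 0).1).diff hV) (fun n => ((hFcomp _ (hS n).1).diff hV).isClosed)
  rw [mem_iInter] at hz
  refine (hz 0).2 (hsub (mem_iInter₂.2 fun n hn => mem_biUnion ?_ (hz n).1))
  exact compactsNear_mono (one_div_le_one_div_of_le (Nat.cast_pos.2 hn) (by linarith)) (hS n)

end Metric

/-- If `⋂_{n≥1} ⋃ {F_L : K ⊆ L ⊆ U_n(K)} ⊆ V` with `V` open, then there is an open `U ⊇ K`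
such that `F_L ⊆ V` for every compact `L ⊆ U`. -/
theorem regularization_open_neighborhood (M X : Type*) [MetricSpace M] [MetricSpace X]
    (F : Set M → Set X)
    (hFcomp : ∀ K : Set M, IsCompact K → IsCompact (F K))
    (hFmono : ∀ K L : Set M, IsCompact K → IsCompact L → K ⊆ L → F K ⊆ F L) :
    ∀ K : Set M, IsCompact K → ∀ V : Set X, IsOpen V →
      (⋂ n ∈ {n : ℕ | 1 ≤ n}, ⋃ L ∈ {L : Set M | IsCompact L ∧ K ⊆ L ∧
        ∀ t ∈ L, Metric.infDist t K < 1 / (n : ℝ)}, F L) ⊆ V →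
      ∃ U : Set M, IsOpen U ∧ K ⊆ U ∧
        ∀ L : Set M, IsCompact L → L ⊆ U → F L ⊆ V := by
  intro K hK V hV hsub
  obtain ⟨n, hn, hnV⟩ := exists_forall_compactsNear_subset hFcomp hFmono hK hV hsub
  have hn_pos : (0 : ℝ) < 1 / n := one_div_pos.2 (Nat.cast_pos.2 hn)
  refine ⟨{t | infDist t K < 1 / n}, isOpen_lt (continuous_infDist_pt K) continuous_const,
    fun t ht => ?_, fun L hL hLU => ?_⟩
  · show infDist t K < 1 / n
    rwa [infDist_zero_of_mem ht]
  · exact (hFmono L (K ∪ L) hL (hK.union hL) subset_union_right).trans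
      (hnV _ (union_mem_compactsNear (hK.union hL) hn_pos hLU))
end
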